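/- Let G be a finite graph, let k = ⌊m(G)⌋ and K = ⌊2m(G)⌋. Then there exist edge-disjoint forests F_K, F_{K-1}, ..., F_{k+1} contained in G such that: (a) for each i with k+1 ≤ i ≤ K, the forest F_i has maximum degree at most ⌈i/(i - m(G))⌉, and (b) for each j with k ≤ j ≤ K, the graph B_j = ∪_{i>j} F_i is (K-j)-degenerate and the graph G \ B_j (G with the edges of B_j removed) is j-degenerate. -/

import Mathlib

open Finset
open scoped Classical

variable {V : Type*}

/-- Number of edges of the graph `G` lying inside the vertex set `S`. -/
noncomputable def edgesIn [Fintype V] (G : SimpleGraph V) (S : Finset V) : ℕ :=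
  (G.edgeFinset.filter (fun e => ∀ v ∈ e, v ∈ S)).card

/-- The maximum density `m(G) = max {e(G')/v(G') : ∅ ≠ G' ⊆ G}` of a finite graph. -/
noncomputable def maxDensity [Fintype V] [Nonempty V] (G : SimpleGraph V) : ℝ :=
  ((Finset.univ : Finset (Finset V)).filter (fun S => S.Nonempty)).sup'
    ⟨Finset.univ, by simp [Finset.univ_nonempty]⟩
    (fun S => (edgesIn G S : ℝ) / (S.card : ℝ))

/-- The maximum 2-density `m₂(G)`. -/
noncomputable def max2Density [Fintype V] (G : SimpleGraph V) : ℝ :=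
  (insert ((1 : ℝ) / 2)
    (((Finset.univ : Finset (Finset V)).filter (fun S => 3 ≤ S.card)).image
      (fun S => ((edgesIn G S : ℝ) - 1) / ((S.card : ℝ) - 2)))).sup'
    (Finset.insert_nonempty _ _) id

/-- Degree of `v` in the subgraph of `G` induced on `S`. -/
noncomputable def degIn [Fintype V] (G : SimpleGraph V) (S : Finset V) (v : V) : ℕ :=
  (S.filter (fun u => G.Adj v u)).card

/-- A graph is `d`-degenerate if every nonempty (induced) subgraph has a vertex of degree at most `d`. -/
def Degenerate [Fintype V] (d : ℕ) (G : SimpleGraph V) : Prop :=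
  ∀ S : Finset V, S.Nonempty → ∃ v ∈ S, degIn G S v ≤ d

/-!
Every subgraph of `G` has average degree at most `2 m(G)`, so `G` is `K`-degenerate: the vertices
can be ranked so that each has at most `K` neighbours of higher rank (its up-neighbours).
Going down from colour `K` to `k + 1`, every vertex with at least `i` up-neighbours sends one of
its still uncoloured up-edges into the colour class `F_i`, where each vertex may receive fewer
than `⌈i / (i - m)⌉` of them. Hall's theorem makes this possible: the up-edges from a set `T` of
senders to their available receivers `N` number at least `i |T|` and at most `m (|T| + |N|)`.
Each `F_i` has at most one up-edge at every vertex, hence is a forest. At every vertex, `B_j`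
contains at most `K - j` up-edges and `G \ B_j` at most `j`, which gives both degeneracy bounds.
-/

lemma Finset.exists_card_fiber_le_of_forall_card_le_mul {ι α : Type*} [Nonempty α]
    (s : Finset ι) (t : ι → Finset α) (c : ℕ)
    (h : ∀ s' ⊆ s, #s' ≤ c * #(s'.biUnion t)) :
    ∃ g : ι → α, (∀ i ∈ s, g i ∈ t i) ∧ ∀ a, #{i ∈ s | g i = a} ≤ c := by
  -- Hall's theorem with `c` copies of every element of `α`
  have hall : ∀ s' : Finset s, #s' ≤ #(s'.biUnion fun i => t i ×ˢ range c) := by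
    intro s'
    have hprod : s'.biUnion (fun i => t i ×ˢ range c) =
        (s'.map (Function.Embedding.subtype _)).biUnion t ×ˢ range c := by
      ext; simp; tauto
    rw [hprod, card_product, card_range, mul_comm, ← card_map (Function.Embedding.subtype _)]
    exact h _ fun i hi => by simp at hi; tauto
  obtain ⟨g, hg, hgt⟩ := (all_card_le_biUnion_card_iff_exists_injective _).mp hall
  let g' : ι → α × ℕ := fun i =>
    if hi : i ∈ s then g ⟨i, hi⟩ else (Classical.arbitrary α, 0)
  have hg' : ∀ i (hi : i ∈ s), g' i = g ⟨i, hi⟩ := fun i hi => dif_pos hi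
  have hg't : ∀ i ∈ s, (g' i).1 ∈ t i ∧ (g' i).2 < c := fun i hi => by
    simpa [hg' i hi] using hgt ⟨i, hi⟩
  refine ⟨fun i => (g' i).1, fun i hi => (hg't i hi).1, fun a => ?_⟩
  calc #{i ∈ s | (g' i).1 = a} ≤ #({a} ×ˢ range c) := by
        refine card_le_card_of_injOn g' (fun i hi => ?_) (fun i hi j hj hij => ?_)
        · simp only [coe_filter, Set.mem_ofPred_eq] at hi
          exact mem_product.mpr ⟨mem_singleton.mpr hi.2, mem_range.mpr (hg't i hi.1).2⟩
        · simp only [coe_filter, Set.mem_ofPred_eq] at hi hj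
          rw [hg' i hi.1, hg' j hj.1] at hij
          exact congrArg Subtype.val (hg hij)
    _ = c := by simp

lemma one_le_ceil_div_sub {m i : ℝ} (hm : 0 ≤ m) (hi : m < i) : 1 ≤ ⌈i / (i - m)⌉₊ :=
  Nat.one_le_ceil_iff.mpr (div_pos (by linarith) (by linarith))

lemma le_ceil_div_sub_sub_one_mul {m i : ℝ} {t n : ℕ} (hm : 0 ≤ m) (hi : m < i)
    (h : i * t ≤ m * (t + n)) : t ≤ (⌈i / (i - m)⌉₊ - 1) * n := by
  have hD : m ≤ ((⌈i / (i - m)⌉₊ - 1 : ℕ) : ℝ) * (i - m) := by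
    rw [Nat.cast_sub (one_le_ceil_div_sub hm hi), Nat.cast_one, sub_mul, one_mul,
      le_sub_iff_add_le, ← div_le_iff₀ (by linarith), add_sub_cancel]
    exact Nat.le_ceil _
  have : (i - m) * t ≤ (i - m) * ((⌈i / (i - m)⌉₊ - 1 : ℕ) * n) := by nlinarith
  exact_mod_cast le_of_mul_le_mul_left this (by linarith)

lemma isAcyclic_of_subsingleton_upNeighbors {H : SimpleGraph V} {r : V → ℕ}
    (hr : Function.Injective r)
    (h : ∀ v, {u | H.Adj v u ∧ r v < r u}.Subsingleton) : H.IsAcyclic := by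
  intro x c hc
  obtain ⟨v, hv, hmin⟩ := c.support.toFinset.exists_min_image r ⟨x, by simp⟩
  rw [List.mem_toFinset] at hv
  obtain ⟨a, b, hab, hnbr⟩ := Set.ncard_eq_two.mp (hc.ncard_neighborSet_toSubgraph_eq_two hv)
  have hup : ∀ u ∈ c.toSubgraph.neighborSet v, H.Adj v u ∧ r v < r u := by
    intro u hu
    have hadj := c.toSubgraph.adj_sub hu
    have hus : u ∈ c.support := c.mem_verts_toSubgraph.mp (c.toSubgraph.edge_vert hu.symm)
    exact ⟨hadj, (hmin u (List.mem_toFinset.mpr hus)).lt_of_ne fun h => hadj.ne (hr h)⟩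
  exact hab (h v (hup a (by simp [hnbr])) (hup b (by simp [hnbr])))

section Rank

variable [Fintype V]

noncomputable def upNeighborFinset (G : SimpleGraph V) (r : V → ℕ) (v : V) : Finset V :=
  {u | G.Adj v u ∧ r v < r u}

@[simp]
lemma mem_upNeighborFinset {G : SimpleGraph V} {r : V → ℕ} {v u : V} :
    u ∈ upNeighborFinset G r v ↔ G.Adj v u ∧ r v < r u := by
  simp [upNeighborFinset]

noncomputable def upDegree (G : SimpleGraph V) (r : V → ℕ) (v : V) : ℕ :=
  #(upNeighborFinset G r v)

lemma Degenerate.exists_rank_on {d : ℕ} {G : SimpleGraph V} (hG : Degenerate d G)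
    (S : Finset V) :
    ∃ r : V → ℕ, Set.InjOn r S ∧ ∀ v ∈ S, #{u ∈ S | G.Adj v u ∧ r v < r u} ≤ d := by
  induction S using Finset.strongInduction with
  | H S ih =>
  obtain rfl | hS := S.eq_empty_or_nonempty
  · exact ⟨fun _ => 0, by simp, by simp⟩
  obtain ⟨v, hv, hdeg⟩ := hG S hS
  obtain ⟨r, hr, hup⟩ := ih (S.erase v) (erase_ssubset hv)
  refine ⟨fun u => if u = v then 0 else r u + 1, ?_, fun w hw => ?_⟩
  · intro a ha b hb hab
    dsimp only at hab
    split_ifs at hab with hav hbv hbv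
    · exact hav.trans hbv.symm
    · exact hr (by simp [ha, hav]) (by simp [hb, hbv]) (by omega)
  by_cases hwv : w = v
  · subst hwv
    exact (card_le_card fun u hu => by simp_all).trans hdeg
  · convert hup w (by simp [hw, hwv]) using 2
    ext u
    by_cases huv : u = v <;> simp [huv, hwv]

lemma Degenerate.exists_rank {d : ℕ} {G : SimpleGraph V} (hG : Degenerate d G) :
    ∃ r : V → ℕ, Function.Injective r ∧ ∀ v, upDegree G r v ≤ d := by
  obtain ⟨r, hr, hup⟩ := hG.exists_rank_on univ
  exact ⟨r, fun a b h => hr (by simp) (by simp) h, fun v => hup v (mem_univ v)⟩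

lemma degenerate_of_upDegree_le {d : ℕ} {H : SimpleGraph V} {r : V → ℕ}
    (hr : Function.Injective r) (h : ∀ v, upDegree H r v ≤ d) : Degenerate d H := by
  intro S hS
  obtain ⟨v, hv, hmin⟩ := S.exists_min_image r hS
  refine ⟨v, hv, (card_le_card fun u hu => ?_).trans (h v)⟩
  rw [mem_filter] at hu
  exact mem_upNeighborFinset.mpr ⟨hu.2, (hmin u hu.1).lt_of_ne fun h => hu.2.ne (hr h)⟩

end Rank

section Density

variable [Fintype V] (G : SimpleGraph V)

lemma sum_degIn_eq_two_mul_edgesIn (S : Finset V) :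
    ∑ v ∈ S, degIn G S v = 2 * edgesIn G S := by
  let H : SimpleGraph V := G ⊓ SimpleGraph.fromRel (fun u v => u ∈ S ∧ v ∈ S)
  have hdeg : ∀ v, H.degree v = if v ∈ S then degIn G S v else 0 := by
    intro v
    rw [← SimpleGraph.card_neighborFinset_eq_degree, degIn, ← Finset.card_empty]
    split_ifs with hv
    · congr 1; ext u; simp [H, hv]; grind [G.ne_of_adj]
    · congr 1; ext u; simp [H, hv]
  have hedge : H.edgeFinset = G.edgeFinset.filter (fun e => ∀ v ∈ e, v ∈ S) := by
    ext e; induction e with | _ a b => ?_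
    simp only [H, SimpleGraph.mem_edgeFinset, SimpleGraph.edgeSet_inf, Set.mem_inter_iff,
      mem_filter, SimpleGraph.mem_edgeSet, SimpleGraph.fromRel_adj, Sym2.mem_iff,
      forall_eq_or_imp, forall_eq]
    grind [G.ne_of_adj]
  calc ∑ v ∈ S, degIn G S v = ∑ v, H.degree v := by simp [hdeg]
    _ = 2 * #H.edgeFinset := by convert H.sum_degrees_eq_twice_card_edges
    _ = 2 * edgesIn G S := by rw [edgesIn, ← hedge]


lemma sum_card_le_edgesIn_of_subset_upNeighborFinset (r : V → ℕ) (T : Finset V)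
    (t : V → Finset V) (ht : ∀ v ∈ T, t v ⊆ upNeighborFinset G r v) :
    ∑ v ∈ T, #(t v) ≤ edgesIn G (T ∪ T.biUnion t) := by
  rw [← card_sigma, edgesIn]
  refine card_le_card_of_injOn (fun p => s(p.1, p.2)) (fun p hp => ?_) (fun p hp q hq hpq => ?_)
  · simp only [coe_sigma, Set.mem_sigma_iff, mem_coe] at hp
    have hpu := mem_upNeighborFinset.mp (ht _ hp.1 hp.2)
    simp only [coe_filter, Set.mem_ofPred_eq, SimpleGraph.mem_edgeFinset,
      SimpleGraph.mem_edgeSet, Sym2.mem_iff]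
    refine ⟨hpu.1, ?_⟩
    rintro v (rfl | rfl)
    · exact mem_union_left _ hp.1
    · exact mem_union_right _ (mem_biUnion.mpr ⟨_, hp.1, hp.2⟩)
  · obtain ⟨v, u⟩ := p
    obtain ⟨v', u'⟩ := q
    simp only [coe_sigma, Set.mem_sigma_iff, mem_coe] at hp hq
    have hvu : r v < r u := (mem_upNeighborFinset.mp (ht _ hp.1 hp.2)).2
    have hvu' : r v' < r u' := (mem_upNeighborFinset.mp (ht _ hq.1 hq.2)).2
    dsimp only at hpq
    rcases Sym2.eq_iff.mp hpq with ⟨rfl, rfl⟩ | ⟨rfl, rfl⟩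
    · rfl
    · omega


variable [Nonempty V]

lemma edgesIn_le_maxDensity_mul_card {S : Finset V} (hS : S.Nonempty) :
    (edgesIn G S : ℝ) ≤ maxDensity G * #S := by
  have hpos : (0 : ℝ) < #S := by exact_mod_cast hS.card_pos
  rw [← div_le_iff₀ hpos]
  exact le_sup' (fun S : Finset V => (edgesIn G S : ℝ) / #S) (by simpa using hS)

lemma maxDensity_nonneg : 0 ≤ maxDensity G :=
  le_sup'_of_le _ (by simp)
    (by positivity : (0 : ℝ) ≤ (edgesIn G univ : ℝ) / #(univ : Finset V))


lemma degenerate_floor_two_mul_maxDensity : Degenerate ⌊2 * maxDensity G⌋₊ G := by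
  intro S hS
  by_contra! hdeg
  have hsum : (⌊2 * maxDensity G⌋₊ + 1) * #S ≤ 2 * edgesIn G S := by
    rw [← sum_degIn_eq_two_mul_edgesIn, mul_comm, ← smul_eq_mul, ← sum_const]
    exact sum_le_sum fun v hv => hdeg v hv
  have hpos : (0 : ℝ) < #S := by exact_mod_cast hS.card_pos
  have hlt : 2 * maxDensity G < ⌊2 * maxDensity G⌋₊ + 1 := Nat.lt_floor_add_one _
  have : ((⌊2 * maxDensity G⌋₊ : ℝ) + 1) * #S ≤ 2 * maxDensity G * #S :=
    calc _ ≤ (2 * edgesIn G S : ℝ) := by exact_mod_cast hsum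
      _ ≤ 2 * maxDensity G * #S := by linarith [edgesIn_le_maxDensity_mul_card G hS]
  exact (mul_lt_mul_of_pos_right hlt hpos).not_ge this

lemma card_le_mul_card_biUnion_of_subset_upNeighborFinset {r : V → ℕ} {A : Finset V}
    {t : V → Finset V} {i : ℕ} (hi : maxDensity G < i)
    (ht : ∀ v ∈ A, t v ⊆ upNeighborFinset G r v ∧ i ≤ #(t v)) (T : Finset V)
    (hT : T ⊆ A) :
    #T ≤ (⌈i / (i - maxDensity G)⌉₊ - 1) * #(T.biUnion t) := by
  obtain rfl | hTne := T.eq_empty_or_nonempty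
  · simp
  have hedges : i * #T ≤ edgesIn G (T ∪ T.biUnion t) := by
    rw [mul_comm, ← smul_eq_mul, ← sum_const]
    exact (sum_le_sum fun v hv => (ht v (hT hv)).2).trans
      (sum_card_le_edgesIn_of_subset_upNeighborFinset G r T t fun v hv => (ht v (hT hv)).1)
  refine le_ceil_div_sub_sub_one_mul (maxDensity_nonneg G) hi ?_
  calc (i : ℝ) * #T ≤ edgesIn G (T ∪ T.biUnion t) := by exact_mod_cast hedges
    _ ≤ maxDensity G * #(T ∪ T.biUnion t) :=
        edgesIn_le_maxDensity_mul_card G (hTne.mono subset_union_left)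
    _ ≤ maxDensity G * (#T + #(T.biUnion t)) := by
        gcongr
        · exact maxDensity_nonneg G
        · exact_mod_cast card_union_le _ _

end Density

section Coloring

variable [Fintype V] (G : SimpleGraph V) (r : V → ℕ)

/-- Each vertex `v` joins one up-edge `v — toFun i v` to every colour class `i` with
`L < i ≤ upDegree G r v`. -/
structure UpEdgeColoring (cap : ℕ → ℕ) (L : ℕ) where
  toFun : ℕ → V → V
  mapsTo : ∀ v, Set.MapsTo (toFun · v) (Set.Ioc L (upDegree G r v)) (upNeighborFinset G r v)
  injOn : ∀ v, Set.InjOn (toFun · v) (Set.Ioc L (upDegree G r v))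
  card_fiber_le : ∀ i, L < i → ∀ u, #{v | i ≤ upDegree G r v ∧ toFun i v = u} ≤ cap i

variable {G r}

lemma UpEdgeColoring.nonempty_of_upDegree_le {cap : ℕ → ℕ} {L : ℕ}
    (hL : ∀ v, upDegree G r v ≤ L) : Nonempty (UpEdgeColoring G r cap L) := by
  have hempty : ∀ v, Set.Ioc L (upDegree G r v) = ∅ := fun v => Set.Ioc_eq_empty (hL v).not_gt
  refine ⟨⟨fun _ v => v, fun v => by simp [hempty, Set.mapsTo_empty], fun v => by simp [hempty],
    fun i hi u => ?_⟩⟩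
  rw [filter_false_of_mem fun v _ h => (hL v).not_gt (hi.trans_le h.1), card_empty]
  exact Nat.zero_le _

variable [Nonempty V]

lemma UpEdgeColoring.nonempty_of_succ {L : ℕ} (hL : maxDensity G < L + 1)
    (c : UpEdgeColoring G r (fun i => ⌈i / (i - maxDensity G)⌉₊ - 1) (L + 1)) :
    Nonempty (UpEdgeColoring G r (fun i => ⌈i / (i - maxDensity G)⌉₊ - 1) L) := by
  set A : Finset V := {v | L + 1 ≤ upDegree G r v}
  set used : V → Finset V := fun v => (Ioc (L + 1) (upDegree G r v)).image (c.toFun · v)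
  set t : V → Finset V := fun v => upNeighborFinset G r v \ used v
  have ht : ∀ v ∈ A, t v ⊆ upNeighborFinset G r v ∧ L + 1 ≤ #(t v) := by
    intro v hv
    have hv : L + 1 ≤ upDegree G r v := (mem_filter.mp hv).2
    have hused : #(used v) ≤ upDegree G r v - (L + 1) :=
      card_image_le.trans_eq (Nat.card_Ioc _ _)
    refine ⟨sdiff_subset, le_trans ?_ (le_card_sdiff (used v) (upNeighborFinset G r v))⟩
    unfold upDegree at *
    omega
  obtain ⟨g, hgt, hg⟩ := exists_card_fiber_le_of_forall_card_le_mul A t _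
    (card_le_mul_card_biUnion_of_subset_upNeighborFinset G (by exact_mod_cast hL) ht)
  have hA : ∀ v, v ∈ A ↔ L + 1 ≤ upDegree G r v := by simp [A]
  have hnew : ∀ v, ∀ i ∈ Set.Ioc (L + 1) (upDegree G r v), g v ≠ c.toFun i v :=
    fun v i hi h => (mem_sdiff.mp (hgt v ((hA v).mpr (hi.1.le.trans hi.2)))).2
      (mem_image.mpr ⟨i, by simpa using hi, h.symm⟩)
  refine ⟨⟨fun i v => if i = L + 1 then g v else c.toFun i v, fun v i ⟨hiL, hid⟩ => ?_,
    fun v i ⟨hiL, hid⟩ j ⟨hjL, hjd⟩ hij => ?_, fun i hi u => ?_⟩⟩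
  · dsimp only
    split_ifs with h
    · have hv : v ∈ A := (hA v).mpr (h ▸ hid)
      exact (ht v hv).1 (hgt v hv)
    · exact c.mapsTo v ⟨by omega, hid⟩
  · dsimp only at hij
    split_ifs at hij with hi' hj'
    · rw [hi', hj']
    · exact absurd hij (hnew v j ⟨by omega, hjd⟩)
    · exact absurd hij.symm (hnew v i ⟨by omega, hid⟩)
    · exact c.injOn v ⟨by omega, hid⟩ ⟨by omega, hjd⟩ hij
  · by_cases h : i = L + 1
    · subst h
      simpa [A, filter_filter] using hg u
    · simpa only [h, if_false] using c.card_fiber_le i (by omega) u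

lemma UpEdgeColoring.nonempty {K L : ℕ} (hK : ∀ v, upDegree G r v ≤ K) (hLK : L ≤ K)
    (hL : maxDensity G < L + 1) :
    Nonempty (UpEdgeColoring G r (fun i => ⌈i / (i - maxDensity G)⌉₊ - 1) L) :=
  Nat.decreasingInduction' (P := fun L => Nonempty (UpEdgeColoring G r _ L))
    (fun _ _ hLk ⟨c⟩ =>
      c.nonempty_of_succ (hL.trans_le (by exact_mod_cast Nat.succ_le_succ hLk)))
    hLK (nonempty_of_upDegree_le hK)

end Coloring

namespace UpEdgeColoring

variable [Fintype V] {G : SimpleGraph V} {r : V → ℕ} {cap : ℕ → ℕ} {L : ℕ}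
  (c : UpEdgeColoring G r cap L)

def colorClass (i : ℕ) : SimpleGraph V :=
  SimpleGraph.fromRel fun v u => i ∈ Set.Ioc L (upDegree G r v) ∧ c.toFun i v = u

lemma adj_and_lt_of_toFun_eq {i : ℕ} {v u : V} (h : i ∈ Set.Ioc L (upDegree G r v))
    (hu : c.toFun i v = u) : G.Adj v u ∧ r v < r u :=
  mem_upNeighborFinset.mp (hu ▸ c.mapsTo v h)

lemma colorClass_le (i : ℕ) : c.colorClass i ≤ G := by
  rintro v u ⟨-, ⟨hi, hu⟩ | ⟨hi, hu⟩⟩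
  · exact (c.adj_and_lt_of_toFun_eq hi hu).1
  · exact (c.adj_and_lt_of_toFun_eq hi hu).1.symm

lemma colorClass_adj_of_lt {i : ℕ} {v u : V} (h : (c.colorClass i).Adj v u) (hvu : r v < r u) :
    i ∈ Set.Ioc L (upDegree G r v) ∧ c.toFun i v = u := by
  obtain ⟨-, h | ⟨hi, hu⟩⟩ := h
  · exact h
  · exact absurd (c.adj_and_lt_of_toFun_eq hi hu).2 hvu.not_gt

lemma isAcyclic_colorClass (hr : Function.Injective r) (i : ℕ) : (c.colorClass i).IsAcyclic :=
  isAcyclic_of_subsingleton_upNeighbors hr fun _ _ ha _ hb =>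
    (c.colorClass_adj_of_lt ha.1 ha.2).2.symm.trans (c.colorClass_adj_of_lt hb.1 hb.2).2

lemma disjoint_colorClass (hr : Function.Injective r) {i j : ℕ} (hij : i ≠ j) :
    Disjoint (c.colorClass i) (c.colorClass j) := by
  have key : ∀ v u, r v < r u → (c.colorClass i).Adj v u → ¬(c.colorClass j).Adj v u := by
    intro v u hvu hi hj
    obtain ⟨hiv, rfl⟩ := c.colorClass_adj_of_lt hi hvu
    obtain ⟨hjv, hju⟩ := c.colorClass_adj_of_lt hj hvu
    exact hij (c.injOn v hiv hjv hju.symm)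
  refine SimpleGraph.disjoint_left.mpr fun v u hi hj => ?_
  rcases lt_or_gt_of_ne (hr.ne hi.ne) with hvu | huv
  · exact key v u hvu hi hj
  · exact key u v huv hi.symm hj.symm

lemma degIn_colorClass_le {i : ℕ} (hi : L < i) (v : V) :
    degIn (c.colorClass i) univ v ≤ cap i + 1 := by
  calc degIn (c.colorClass i) univ v
      ≤ #(insert (c.toFun i v) ({w | i ≤ upDegree G r w ∧ c.toFun i w = v} : Finset V)) := by
        refine card_le_card fun u hu => ?_
        obtain ⟨-, ⟨-, rfl⟩ | ⟨hi, rfl⟩⟩ := (mem_filter.mp hu).2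
        · exact mem_insert_self _ _
        · exact mem_insert_of_mem (mem_filter.mpr ⟨mem_univ _, hi.2, rfl⟩)
    _ ≤ cap i + 1 := (card_insert_le _ _).trans (by simpa using c.card_fiber_le i hi v)

lemma degenerate_iSup_colorClass (hr : Function.Injective r) (j K : ℕ) :
    Degenerate (K - j) (⨆ i ∈ Set.Ioc j K, c.colorClass i) := by
  refine degenerate_of_upDegree_le hr fun v => ?_
  calc upDegree _ r v ≤ #((Ioc j K).image (c.toFun · v)) := by
        refine card_le_card fun u hu => ?_
        obtain ⟨hadj, hvu⟩ := mem_upNeighborFinset.mp hu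
        simp only [SimpleGraph.iSup_adj] at hadj
        obtain ⟨i, hi, hadj⟩ := hadj
        exact mem_image.mpr ⟨i, by simpa using hi, (c.colorClass_adj_of_lt hadj hvu).2⟩
    _ ≤ K - j := card_image_le.trans (Nat.card_Ioc _ _).le

lemma degenerate_sdiff_iSup_colorClass (hr : Function.Injective r) {j K : ℕ} (hLj : L ≤ j)
    (hK : ∀ v, upDegree G r v ≤ K) :
    Degenerate j (G \ ⨆ i ∈ Set.Ioc j K, c.colorClass i) := by
  refine degenerate_of_upDegree_le hr fun v => ?_
  set I := (Ioc j (upDegree G r v)).image (c.toFun · v)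
  have hIoc : ∀ i ∈ Ioc j (upDegree G r v), i ∈ Set.Ioc L (upDegree G r v) := fun i hi =>
    ⟨hLj.trans_lt (mem_Ioc.mp hi).1, (mem_Ioc.mp hi).2⟩
  have hI : #I = upDegree G r v - j := by
    rw [card_image_of_injOn ((c.injOn v).mono fun i hi => hIoc i hi), Nat.card_Ioc]
  have hIup : I ⊆ upNeighborFinset G r v :=
    image_subset_iff.mpr fun i hi => c.mapsTo v (hIoc i hi)
  calc upDegree _ r v ≤ #(upNeighborFinset G r v \ I) := by
        refine card_le_card fun u hu => ?_
        obtain ⟨hadj, hvu⟩ := mem_upNeighborFinset.mp hu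
        rw [SimpleGraph.sdiff_adj] at hadj
        refine mem_sdiff.mpr ⟨mem_upNeighborFinset.mpr ⟨hadj.1, hvu⟩, fun huI => hadj.2 ?_⟩
        obtain ⟨i, hi, rfl⟩ := mem_image.mp huI
        simp only [SimpleGraph.iSup_adj]
        exact ⟨i, ⟨(mem_Ioc.mp hi).1, (mem_Ioc.mp hi).2.trans (hK v)⟩,
          fun h => hvu.ne (congrArg r h), Or.inl ⟨hIoc i hi, rfl⟩⟩
    _ ≤ j := by
        rw [card_sdiff_of_subset hIup, hI]
        unfold upDegree
        omega

end UpEdgeColoring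

/-- degenerate decomposition. With `k = ⌊m(G)⌋` and `K = ⌊2m(G)⌋` there are
edge-disjoint forests `F_K, …, F_{k+1}` inside `G` such that each `F_i` has maximum degree at
most `⌈i/(i - m(G))⌉`, and for each `k ≤ j ≤ K` the union `B_j = ⋃_{i > j} F_i` is
`(K - j)`-degenerate and `G \ B_j` is `j`-degenerate. -/
theorem stmt_5 [Fintype V] [Nonempty V] (G : SimpleGraph V) :
    ∃ F : ℕ → SimpleGraph V,
      (∀ i, ⌊maxDensity G⌋₊ + 1 ≤ i → i ≤ ⌊2 * maxDensity G⌋₊ →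
        F i ≤ G ∧ (F i).IsAcyclic ∧
        ∀ v, degIn (F i) Finset.univ v ≤ ⌈(i : ℝ) / ((i : ℝ) - maxDensity G)⌉₊) ∧
      (∀ i j, i ≠ j → Disjoint (F i) (F j)) ∧
      (∀ j, ⌊maxDensity G⌋₊ ≤ j → j ≤ ⌊2 * maxDensity G⌋₊ →
        Degenerate (⌊2 * maxDensity G⌋₊ - j) (⨆ i ∈ Set.Ioc j ⌊2 * maxDensity G⌋₊, F i) ∧
        Degenerate j (G \ ⨆ i ∈ Set.Ioc j ⌊2 * maxDensity G⌋₊, F i)) := by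
  have hm := maxDensity_nonneg G
  obtain ⟨r, hr, hK⟩ := (degenerate_floor_two_mul_maxDensity G).exists_rank
  obtain ⟨c⟩ := UpEdgeColoring.nonempty (L := ⌊maxDensity G⌋₊) hK
    (Nat.floor_le_floor (by linarith)) (Nat.lt_floor_add_one _)
  refine ⟨c.colorClass,
    fun i hi _ => ⟨c.colorClass_le i, c.isAcyclic_colorClass hr i, fun v => ?_⟩,
    fun _ _ => c.disjoint_colorClass hr,
    fun j hj _ =>
      ⟨c.degenerate_iSup_colorClass hr j _, c.degenerate_sdiff_iSup_colorClass hr hj hK⟩⟩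
  have hmi : maxDensity G < i := (Nat.lt_floor_add_one _).trans_le (by exact_mod_cast hi)
  simpa [Nat.sub_add_cancel (one_le_ceil_div_sub hm hmi)] using c.degIn_colorClass_le hi v
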